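/- Let (X, ρ) be a complete metric space, let m ∈ ℕ with m ≥ 3, and let ψ : X → X be a mapping that is k-continuous for some k ∈ ℕ (i.e. ψ^k is continuous) and satisfies ρ(ψ^m x, ψ^m y) ≤ α(ρ(x, ψy) + ρ(y, ψx)) for all x, y ∈ X, for some constant α ∈ [0, 1/2). Then ψ has a unique fixed point x* in X, and for every initial point x₀ ∈ X the iterative sequence (ψⁿx₀) converges to x*. -/

import Mathlib

/-!
Put `dₙ = ρ(ψⁿx, ψⁿ⁺¹x)`. The contraction applied to the pair `(ψⁿx, ψⁿ⁺¹x)` gives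
`d_{n+m} ≤ 2α · max(dₙ, d_{n+1})`, so `dₙ` decays geometrically with any ratio `r < 1` such that
`2α ≤ rᵐ`, and every orbit is Cauchy. The limit `z` of an orbit is fixed by the continuous map
`ψᵏ`, so the orbit of `z` is `k`-periodic; being convergent as well, it is constant, i.e. `ψz = z`.
Two fixed points `y, z` satisfy `ρ(y, z) ≤ 2α ρ(y, z)`, hence coincide.
-/

open Filter Function Topology

lemma exists_pos_lt_one_le_pow {β : ℝ} (hβ : β < 1) {m : ℕ} (hm : m ≠ 0) :
    ∃ r : ℝ, 0 < r ∧ r < 1 ∧ β ≤ r ^ m := by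
  set b := max β (1 / 2)
  have hb0 : 0 < b := lt_max_of_lt_right (by norm_num)
  refine ⟨b ^ (m⁻¹ : ℝ), by positivity,
    Real.rpow_lt_one hb0.le (max_lt hβ (by norm_num)) (by positivity), ?_⟩
  rw [Real.rpow_inv_natCast_pow hb0.le hm]
  exact le_max_left _ _

lemma le_geometric_of_le_pow_mul_max {d : ℕ → ℝ} {m : ℕ} {r C : ℝ} (hm : 1 < m)
    (hr0 : 0 ≤ r) (hr1 : r ≤ 1) (hC : 0 ≤ C) (hbase : ∀ n < m, d n ≤ C * r ^ n)
    (hstep : ∀ n, d (n + m) ≤ r ^ m * max (d n) (d (n + 1))) (n : ℕ) :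
    d n ≤ C * r ^ n := by
  induction n using Nat.strong_induction_on with
  | _ n ih =>
    rcases lt_or_ge n m with hn | hn
    · exact hbase n hn
    obtain ⟨p, rfl⟩ : ∃ p, n = p + m := ⟨n - m, by omega⟩
    have hmax : max (d p) (d (p + 1)) ≤ C * r ^ p := by
      refine max_le (ih p (by omega)) ((ih (p + 1) (by omega)).trans ?_)
      exact mul_le_mul_of_nonneg_left (pow_le_pow_of_le_one hr0 hr1 p.le_succ) hC
    calc d (p + m) ≤ r ^ m * max (d p) (d (p + 1)) := hstep p
      _ ≤ r ^ m * (C * r ^ p) := mul_le_mul_of_nonneg_left hmax (by positivity)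
      _ = C * r ^ (p + m) := by ring

lemma Function.IsPeriodicPt.isFixedPt_of_tendsto {Y : Type*} [TopologicalSpace Y] [T2Space Y]
    {f : Y → Y} {k : ℕ} {z w : Y} (hz : IsPeriodicPt f k z) (hk : 0 < k)
    (h : Tendsto (fun n ↦ f^[n] z) atTop (𝓝 w)) : IsFixedPt f z := by
  have hmul : Tendsto (k * ·) atTop atTop := tendsto_id.const_mul_atTop' hk
  have hz_lim : Tendsto (fun n ↦ f^[k * n] z) atTop (𝓝 w) := h.comp hmul
  have hfz_lim : Tendsto (fun n ↦ f^[k * n + 1] z) atTop (𝓝 w) :=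
    h.comp ((tendsto_add_atTop_nat 1).comp hmul)
  simp only [iterate_succ_apply', (hz.mul_const _).eq, tendsto_const_nhds_iff] at hz_lim hfz_lim
  exact hfz_lim.trans hz_lim.symm

lemma isFixedPt_of_tendsto_iterate_of_continuous_iterate {Y : Type*} [TopologicalSpace Y]
    [T2Space Y] {f : Y → Y} {k : ℕ} (hk : 0 < k) (hfk : Continuous f^[k])
    (hconv : ∀ x, ∃ y, Tendsto (fun n ↦ f^[n] x) atTop (𝓝 y)) {x z : Y}
    (hx : Tendsto (fun n ↦ f^[n] x) atTop (𝓝 z)) : IsFixedPt f z := by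
  have hzk : IsPeriodicPt f k z := by
    have hsub : Tendsto (fun n ↦ f^[k * n] x) atTop (𝓝 z) :=
      hx.comp (tendsto_id.const_mul_atTop' hk)
    simp only [iterate_mul] at hsub
    exact isFixedPt_of_tendsto_iterate hsub hfk.continuousAt
  obtain ⟨w, hw⟩ := hconv z
  exact hzk.isFixedPt_of_tendsto hk hw

section Chatterjea

variable {X : Type*} [MetricSpace X]

/-- The inequality of an `m`-Chatterjea contraction; the bound `α < 1 / 2` is assumed separately. -/
def IsIterateChatterjea (m : ℕ) (α : ℝ) (ψ : X → X) : Prop :=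
  ∀ x y : X, dist (ψ^[m] x) (ψ^[m] y) ≤ α * (dist x (ψ y) + dist y (ψ x))

variable {m : ℕ} {α : ℝ} {ψ : X → X}

namespace IsIterateChatterjea

lemma dist_iterate_le_two_mul_max (hψ : IsIterateChatterjea m α ψ) (hα : 0 ≤ α) (x : X) :
    dist (ψ^[m] x) (ψ^[m] (ψ x)) ≤ 2 * α * max (dist x (ψ x)) (dist (ψ x) (ψ (ψ x))) := by
  have h := hψ x (ψ x)
  rw [dist_self, add_zero] at h
  have htri := dist_triangle x (ψ x) (ψ (ψ x))
  have h1 := le_max_left (dist x (ψ x)) (dist (ψ x) (ψ (ψ x)))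
  have h2 := le_max_right (dist x (ψ x)) (dist (ψ x) (ψ (ψ x)))
  nlinarith

lemma cauchySeq_iterate (hψ : IsIterateChatterjea m α ψ) (hm : 1 < m)
    (hα0 : 0 ≤ α) (hα : α < 1 / 2) (x : X) : CauchySeq (fun n ↦ ψ^[n] x) := by
  obtain ⟨r, hr0, hr1, hαr⟩ :=
    exists_pos_lt_one_le_pow (β := 2 * α) (by linarith) (by omega : m ≠ 0)
  set d : ℕ → ℝ := fun n ↦ dist (ψ^[n] x) (ψ^[n + 1] x)
  set D := ∑ i ∈ Finset.range m, d i
  have hD : 0 ≤ D := Finset.sum_nonneg fun i _ ↦ dist_nonneg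
  have hstep (n : ℕ) : d (n + m) ≤ 2 * α * max (d n) (d (n + 1)) := by
    simpa only [d, ← iterate_succ_apply' ψ, ← iterate_add_apply, add_comm m, Nat.succ_eq_add_one,
      add_right_comm n 1 m] using hψ.dist_iterate_le_two_mul_max hα0 (ψ^[n] x)
  have hbase : ∀ n < m, d n ≤ D / r ^ (m - 1) * r ^ n := by
    intro n hn
    have hpow : r ^ (m - 1) ≤ r ^ n := pow_le_pow_of_le_one hr0.le hr1.le (by omega)
    calc d n ≤ D := Finset.single_le_sum (f := d) (fun i _ ↦ dist_nonneg) (Finset.mem_range.2 hn)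
      _ ≤ D / r ^ (m - 1) * r ^ n := by
        rw [div_mul_eq_mul_div, le_div_iff₀ (by positivity)]
        exact mul_le_mul_of_nonneg_left hpow hD
  refine cauchySeq_of_le_geometric r _ hr1
    (le_geometric_of_le_pow_mul_max hm hr0.le hr1.le (by positivity) hbase fun n ↦ ?_)
  exact (hstep n).trans (mul_le_mul_of_nonneg_right hαr (le_max_of_le_left dist_nonneg))

lemma eq_of_isFixedPt (hψ : IsIterateChatterjea m α ψ) (hα : α < 1 / 2) {y z : X}
    (hy : IsFixedPt ψ y) (hz : IsFixedPt ψ z) : y = z := by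
  have h := hψ y z
  rw [(hy.iterate m).eq, (hz.iterate m).eq, hy.eq, hz.eq, dist_comm z y] at h
  exact dist_le_zero.1 (by nlinarith [dist_nonneg (x := y) (y := z)])

end IsIterateChatterjea

end Chatterjea

/-- **Theorem 3.3.** If `(X, ρ)` is a complete metric space, `m ≥ 3`, and `ψ : X → X` is
`k`-continuous for some `k ∈ ℕ` and satisfies `ρ(ψ^m x, ψ^m y) ≤ α (ρ(x, ψy) + ρ(y, ψx))`
for all `x, y ∈ X` with `α ∈ [0, 1/2)`, then `ψ` has a unique fixed point and every
iterative sequence `(ψⁿ x₀)` converges to it. -/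
theorem stmt_11 {X : Type*} [MetricSpace X] [CompleteSpace X] [Nonempty X]
    (m : ℕ) (hm : 3 ≤ m)
    (ψ : X → X) (k : ℕ) (hk : 1 ≤ k) (hψk : Continuous (ψ^[k]))
    (α : ℝ) (hα0 : 0 ≤ α) (hα : α < 1 / 2)
    (hcontr : ∀ x y : X, dist (ψ^[m] x) (ψ^[m] y) ≤ α * (dist x (ψ y) + dist y (ψ x))) :
    ∃ xs : X, ψ xs = xs ∧ (∀ y : X, ψ y = y → y = xs) ∧
      ∀ x₀ : X, Filter.Tendsto (fun n => ψ^[n] x₀) Filter.atTop (nhds xs) := by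
  have hψ : IsIterateChatterjea m α ψ := hcontr
  have hconv (x : X) : ∃ y, Tendsto (fun n ↦ ψ^[n] x) atTop (𝓝 y) :=
    cauchySeq_tendsto_of_complete (hψ.cauchySeq_iterate (by omega) hα0 hα x)
  have hfix {x y : X} (h : Tendsto (fun n ↦ ψ^[n] x) atTop (𝓝 y)) : IsFixedPt ψ y :=
    isFixedPt_of_tendsto_iterate_of_continuous_iterate (by omega) hψk hconv h
  obtain ⟨xs, hxs⟩ := hconv (Classical.arbitrary X)
  refine ⟨xs, hfix hxs, fun y hy ↦ hψ.eq_of_isFixedPt hα hy (hfix hxs), fun x₀ ↦ ?_⟩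
  obtain ⟨y, hy⟩ := hconv x₀
  rwa [hψ.eq_of_isFixedPt hα (hfix hy) (hfix hxs)] at hy
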